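/- arXiv:1311.1972 — 2 statements merged into one kernel-verified Lean document; each statement's English description precedes it below -/
import Mathlib

section
/- Let 0 < s < 1 and let f : ℝ³ → ℝ satisfy the global Hölder bound |f(x) − f(y)| ≤ H·δ(x,y)^s for all x, y ∈ ℝ³ and some H > 0. Let Ψ ∈ L¹(ℝ³) satisfy ∫_{ℝ³} Ψ(y) dy = 0 and I = ∫_{ℝ³} ‖y‖^s |Ψ(y)| dy < ∞. Then for every a ∈ ℝ³ and every λ > 0, the integral ∫_{ℝ³} f(a∗(λ∘y)) Ψ(y) dy is well defined and satisfies |∫_{ℝ³} f(a∗(λ∘y)) Ψ(y) dy| ≤ H·I·λ^s. In particular, the wavelet-type coefficients d_{j,k} = 2^{4j} ∫_{ℝ³} f(x) Ψ(2^j∘(x_{j,k}⁻¹∗x)) dx satisfy |d_{j,k}| ≤ H·I·2^{−js} for all j ∈ ℤ and k ∈ ℤ³. -/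
noncomputable section

open MeasureTheory

/-- The underlying space of the Heisenberg group: `ℝ³`. -/
abbrev H3 : Type := ℝ × ℝ × ℝ

/-- The Heisenberg group law `(p,q,r)∗(p',q',r') = (p+p', q+q', r+r'+2(qp'−pq'))`. -/
def Hmul (x y : H3) : H3 :=
  (x.1 + y.1, x.2.1 + y.2.1, x.2.2 + y.2.2 + 2 * (x.2.1 * y.1 - x.1 * y.2.1))

/-- The inverse for the Heisenberg group law. -/
def Hinv (x : H3) : H3 := (-x.1, -x.2.1, -x.2.2)

/-- The homogeneous (gauge) norm `‖(p,q,r)‖ = ((p²+q²)²+r²)^(1/4)`. -/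
def Hnorm (x : H3) : ℝ := ((x.1 ^ 2 + x.2.1 ^ 2) ^ 2 + x.2.2 ^ 2) ^ ((1 : ℝ) / 4)

/-- The gauge distance `δ(x,y) = ‖x⁻¹∗y‖`. -/
def Hdist (x y : H3) : ℝ := Hnorm (Hmul (Hinv x) y)

/-- The gauge ball `B(x,r)`. -/
def Hball (x : H3) (r : ℝ) : Set H3 := {y | Hdist x y < r}

/-- The dilation `λ∘(p,q,r) = (λp, λq, λ²r)`. -/
def Hdil (l : ℝ) (x : H3) : H3 := (l * x.1, l * x.2.1, l ^ 2 * x.2.2)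

/-- A lattice point of `ℤ³` seen inside `ℝ³`. -/
def latticePt (k : ℤ × ℤ × ℤ) : H3 := ((k.1 : ℝ), (k.2.1 : ℝ), (k.2.2 : ℝ))

/-- The dyadic point `x_{j,k} = 2^{−j}∘k`. -/
def xjk (j : ℤ) (k : ℤ × ℤ × ℤ) : H3 := Hdil ((2 : ℝ) ^ (-j)) (latticePt k)

/-! Because `∫ Ψ = 0`, the constant `f a` may be subtracted from `f (a ∗ (λ ∘ y))` for free.
Left invariance and homogeneity of the gauge give `δ(a, a ∗ (λ ∘ y)) = λ ‖y‖`, so the Hölder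
bound dominates the integrand by `H λ^s ‖y‖^s |Ψ y|`. The wavelet coefficient `d_{j,k}` is the
case `a = x_{j,k}`, `λ = 2^{-j}` after the substitution `x = a ∗ (λ ∘ y)`: left translations are
shears preserving Lebesgue measure and `λ ∘ ·` scales it by `λ⁴`, which cancels `2^{4j}`. -/

lemma Hinv_mul_cancel (a z : H3) : Hmul (Hinv a) (Hmul a z) = z := by
  simp only [Hmul, Hinv]
  ext <;> simp; ring

lemma Hdil_Hdil (c d : ℝ) (y : H3) : Hdil c (Hdil d y) = Hdil (c * d) y := by
  simp only [Hdil, mul_pow, mul_assoc]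

lemma Hdil_one (y : H3) : Hdil 1 y = y := by
  simp [Hdil]

lemma Hmul_left_injective (a : H3) : Function.Injective (Hmul a) :=
  Function.LeftInverse.injective (Hinv_mul_cancel a)

lemma Hdil_injective {l : ℝ} (hl : l ≠ 0) : Function.Injective (Hdil l) :=
  Function.LeftInverse.injective (g := Hdil l⁻¹) fun y => by
    rw [Hdil_Hdil, inv_mul_cancel₀ hl, Hdil_one]

lemma Hnorm_nonneg (y : H3) : 0 ≤ Hnorm y :=
  Real.rpow_nonneg (by positivity) _

lemma Hnorm_Hdil {l : ℝ} (hl : 0 ≤ l) (y : H3) : Hnorm (Hdil l y) = l * Hnorm y := by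
  have h : ((l * y.1) ^ 2 + (l * y.2.1) ^ 2) ^ 2 + (l ^ 2 * y.2.2) ^ 2
      = l ^ 4 * ((y.1 ^ 2 + y.2.1 ^ 2) ^ 2 + y.2.2 ^ 2) := by ring
  rw [Hnorm, Hdil, h, Real.mul_rpow (by positivity) (by positivity), Hnorm,
    ← Real.rpow_natCast l 4, ← Real.rpow_mul hl]
  norm_num

lemma Hdist_self_Hmul (a z : H3) : Hdist a (Hmul a z) = Hnorm z := by
  rw [Hdist, Hinv_mul_cancel]

lemma Hdist_self (x : H3) : Hdist x x = 0 := by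
  have h : Hmul (Hinv x) x = 0 := by
    simp only [Hmul, Hinv]
    ext <;> simp; ring
  rw [Hdist, h, Hnorm]
  norm_num

lemma continuous_Hnorm : Continuous Hnorm :=
  Continuous.rpow_const (by fun_prop) fun _ => Or.inr (by norm_num)

lemma continuous_Hdist (x : H3) : Continuous (Hdist x) :=
  continuous_Hnorm.comp (by unfold Hmul Hinv; fun_prop)

lemma continuous_Hmul (a : H3) : Continuous (Hmul a) := by
  unfold Hmul
  fun_prop

lemma continuous_Hdil (l : ℝ) : Continuous (Hdil l) := by
  unfold Hdil
  fun_prop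

theorem continuous_of_abs_sub_le_rpow {X : Type*} [TopologicalSpace X] {d : X → X → ℝ}
    (hd : ∀ x, Continuous (d x)) (hdx : ∀ x, d x x = 0) {f : X → ℝ} {H s : ℝ} (hs : 0 < s)
    (hf : ∀ x y, |f x - f y| ≤ H * d x y ^ s) : Continuous f := by
  refine continuous_iff_continuousAt.2 fun x => tendsto_iff_dist_tendsto_zero.2 ?_
  have hbound : Filter.Tendsto (fun y => H * d x y ^ s) (nhds x) (nhds 0) := by
    have h : Filter.Tendsto (fun y => H * d x y ^ s) (nhds x) (nhds (H * d x x ^ s)) :=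
      (continuous_const.mul ((hd x).rpow_const fun _ => Or.inr hs.le)).tendsto x
    rwa [hdx x, Real.zero_rpow hs.ne', mul_zero] at h
  refine squeeze_zero (fun _ => dist_nonneg) (fun y => ?_) hbound
  rw [Real.dist_eq, abs_sub_comm]
  exact hf x y

lemma abs_sub_mul_le_of_abs_sub_le {α : Type*} {g Ψ w : α → ℝ} {c K : ℝ}
    (hgw : ∀ y, |g y - c| ≤ K * w y) (y : α) :
    |(g y - c) * Ψ y| ≤ K * (w y * |Ψ y|) := by
  rw [abs_mul, ← mul_assoc]
  exact mul_le_mul_of_nonneg_right (hgw y) (abs_nonneg _)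

section VanishingMean

variable {α : Type*} [MeasurableSpace α] {μ : Measure α} {g Ψ w : α → ℝ} {c K : ℝ}

theorem integrable_sub_const_mul_of_abs_sub_le (hg : AEStronglyMeasurable g μ)
    (hΨ : AEStronglyMeasurable Ψ μ) (hw : Integrable (fun y => w y * |Ψ y|) μ)
    (hgw : ∀ y, |g y - c| ≤ K * w y) : Integrable (fun y => (g y - c) * Ψ y) μ :=
  (hw.const_mul K).mono' ((hg.sub aestronglyMeasurable_const).mul hΨ)
    (.of_forall (abs_sub_mul_le_of_abs_sub_le hgw))

theorem integrable_mul_of_abs_sub_le (hg : AEStronglyMeasurable g μ) (hΨ : Integrable Ψ μ)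
    (hw : Integrable (fun y => w y * |Ψ y|) μ) (hgw : ∀ y, |g y - c| ≤ K * w y) :
    Integrable (fun y => g y * Ψ y) μ :=
  ((integrable_sub_const_mul_of_abs_sub_le hg hΨ.1 hw hgw).add (hΨ.const_mul c)).congr
    (.of_forall fun y => by simp only [Pi.add_apply]; ring)

theorem abs_integral_mul_le_of_integral_eq_zero (hg : AEStronglyMeasurable g μ)
    (hΨ : Integrable Ψ μ) (hΨ0 : ∫ y, Ψ y ∂μ = 0) (hw : Integrable (fun y => w y * |Ψ y|) μ)
    (hgw : ∀ y, |g y - c| ≤ K * w y) :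
    |∫ y, g y * Ψ y ∂μ| ≤ K * ∫ y, w y * |Ψ y| ∂μ := by
  have hshift : ∫ y, (g y - c) * Ψ y ∂μ = ∫ y, g y * Ψ y ∂μ := by
    simp_rw [sub_mul]
    rw [integral_sub (integrable_mul_of_abs_sub_le hg hΨ hw hgw) (hΨ.const_mul c),
      integral_const_mul, hΨ0, mul_zero, sub_zero]
  calc |∫ y, g y * Ψ y ∂μ| = |∫ y, (g y - c) * Ψ y ∂μ| := by rw [hshift]
    _ ≤ ∫ y, |(g y - c) * Ψ y| ∂μ := abs_integral_le_integral_abs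
    _ ≤ ∫ y, K * (w y * |Ψ y|) ∂μ :=
      integral_mono (integrable_sub_const_mul_of_abs_sub_le hg hΨ.1 hw hgw).abs
        (hw.const_mul K) (abs_sub_mul_le_of_abs_sub_le hgw)
    _ = K * ∫ y, w y * |Ψ y| ∂μ := integral_const_mul _ _

end VanishingMean

theorem measurePreserving_Hmul (a : H3) : MeasurePreserving (Hmul a) volume volume := by
  have hfiber : ∀ y₁ : ℝ, MeasurePreserving
      (fun p : ℝ × ℝ => (a.2.1 + p.1, a.2.2 + 2 * (a.2.1 * y₁ - a.1 * p.1) + p.2))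
      volume volume := fun y₁ => by
    rw [Measure.volume_eq_prod]
    exact (measurePreserving_add_left volume a.2.1).skew_product
      (g := fun y₂ y₃ => a.2.2 + 2 * (a.2.1 * y₁ - a.1 * y₂) + y₃) (by fun_prop)
      (.of_forall fun y₂ => (measurePreserving_add_left volume _).map_eq)
  have h := (measurePreserving_add_left volume a.1).skew_product (by fun_prop)
    (.of_forall fun y₁ => (hfiber y₁).map_eq)
  have hHmul : Hmul a = fun y =>
      (a.1 + y.1, a.2.1 + y.2.1, a.2.2 + 2 * (a.2.1 * y.1 - a.1 * y.2.1) + y.2.2) := by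
    funext y
    simp only [Hmul, Prod.mk.injEq, true_and]
    ring
  rwa [hHmul, Measure.volume_eq_prod]

lemma measurePreserving_const_mul_volume {l : ℝ} (hl : l ≠ 0) :
    MeasurePreserving (l * ·) volume (ENNReal.ofReal |l⁻¹| • volume) :=
  ⟨measurable_const_mul l, Real.map_volume_mul_left hl⟩

theorem measurePreserving_Hdil {l : ℝ} (hl : l ≠ 0) :
    MeasurePreserving (Hdil l) volume (ENNReal.ofReal (l ^ 4)⁻¹ • volume) := by
  have h := (measurePreserving_const_mul_volume hl).prod
    ((measurePreserving_const_mul_volume hl).prod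
      (measurePreserving_const_mul_volume (pow_ne_zero 2 hl)))
  simp only [Measure.prod_smul_left, Measure.prod_smul_right, smul_smul,
    ← Measure.volume_eq_prod] at h
  have hc : ENNReal.ofReal |(l ^ 2)⁻¹| * ENNReal.ofReal |l⁻¹| * ENNReal.ofReal |l⁻¹| =
      ENNReal.ofReal (l ^ 4)⁻¹ := by
    rw [← ENNReal.ofReal_mul (abs_nonneg _), ← ENNReal.ofReal_mul (by positivity), ← abs_mul,
      ← abs_mul, ← abs_of_nonneg (by positivity : (0 : ℝ) ≤ (l ^ 4)⁻¹)]
    congr 2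
    ring
  rwa [hc] at h

theorem integral_comp_Hmul_Hdil (a : H3) {l : ℝ} (hl : l ≠ 0) (G : H3 → ℝ) :
    ∫ y, G (Hmul a (Hdil l y)) = (l ^ 4)⁻¹ * ∫ x, G x := by
  rw [(measurePreserving_Hdil hl).integral_comp
      ((continuous_Hdil l).measurableEmbedding (Hdil_injective hl)) (fun y => G (Hmul a y)),
    integral_smul_measure, (measurePreserving_Hmul a).integral_comp
      ((continuous_Hmul a).measurableEmbedding (Hmul_left_injective a)),
    ENNReal.toReal_ofReal (by positivity), smul_eq_mul]

theorem wavelet_coeff_eq_integral (F Ψ : H3 → ℝ) (a : H3) (j : ℤ) :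
    (2 : ℝ) ^ (4 * j) * ∫ x, F x * Ψ (Hdil ((2 : ℝ) ^ j) (Hmul (Hinv a) x)) =
      ∫ y, F (Hmul a (Hdil ((2 : ℝ) ^ (-j)) y)) * Ψ y := by
  have hl : (2 : ℝ) ^ (-j) ≠ 0 := zpow_ne_zero _ two_ne_zero
  have hcancel : (2 : ℝ) ^ j * (2 : ℝ) ^ (-j) = 1 := by
    rw [← zpow_add₀ two_ne_zero, add_neg_cancel, zpow_zero]
  have hscale : (2 : ℝ) ^ (4 * j) = (((2 : ℝ) ^ (-j)) ^ 4)⁻¹ := by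
    rw [← zpow_natCast, ← zpow_mul, ← zpow_neg]
    ring_nf
  rw [hscale, ← integral_comp_Hmul_Hdil a hl]
  simp only [Hinv_mul_cancel, Hdil_Hdil, hcancel, Hdil_one]

theorem integrable_and_abs_integral_holder_comp_mul_le {s H : ℝ} (hs : 0 < s) {f Ψ : H3 → ℝ}
    (hf : ∀ x y : H3, |f x - f y| ≤ H * Hdist x y ^ s) (hΨ : Integrable Ψ)
    (hΨ0 : ∫ y : H3, Ψ y = 0) (hI : Integrable fun y : H3 => Hnorm y ^ s * |Ψ y|)
    (a : H3) {l : ℝ} (hl : 0 < l) :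
    Integrable (fun y : H3 => f (Hmul a (Hdil l y)) * Ψ y) ∧
      |∫ y : H3, f (Hmul a (Hdil l y)) * Ψ y| ≤ H * (∫ y : H3, Hnorm y ^ s * |Ψ y|) * l ^ s := by
  have hmeas : AEStronglyMeasurable (fun y => f (Hmul a (Hdil l y))) volume :=
    ((continuous_of_abs_sub_le_rpow continuous_Hdist Hdist_self hs hf).comp
      ((continuous_Hmul a).comp (continuous_Hdil l))).aestronglyMeasurable
  have hholder : ∀ y, |f (Hmul a (Hdil l y)) - f a| ≤ (H * l ^ s) * Hnorm y ^ s := fun y => by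
    rw [abs_sub_comm, mul_assoc, ← Real.mul_rpow hl.le (Hnorm_nonneg y), ← Hnorm_Hdil hl.le,
      ← Hdist_self_Hmul a]
    exact hf _ _
  refine ⟨integrable_mul_of_abs_sub_le hmeas hΨ hI hholder, ?_⟩
  calc _ ≤ (H * l ^ s) * ∫ y : H3, Hnorm y ^ s * |Ψ y| :=
        abs_integral_mul_le_of_integral_eq_zero hmeas hΨ hΨ0 hI hholder
    _ = _ := by ring

theorem heisenberg_holder_wavelet_bound_general
    (s H : ℝ) (hs0 : 0 < s)
    (f Ψ : H3 → ℝ)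
    (hf : ∀ x y : H3, |f x - f y| ≤ H * Hdist x y ^ s)
    (hΨint : Integrable Ψ (volume : Measure H3))
    (hΨ0 : ∫ y : H3, Ψ y = 0)
    (hI : Integrable (fun y : H3 => Hnorm y ^ s * |Ψ y|) (volume : Measure H3)) :
    (∀ a : H3, ∀ l : ℝ, 0 < l →
        Integrable (fun y : H3 => f (Hmul a (Hdil l y)) * Ψ y) (volume : Measure H3) ∧
        |∫ y : H3, f (Hmul a (Hdil l y)) * Ψ y| ≤
          H * (∫ y : H3, Hnorm y ^ s * |Ψ y|) * l ^ s) ∧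
    (∀ j : ℤ, ∀ k : ℤ × ℤ × ℤ,
        |(2 : ℝ) ^ (4 * j) *
            ∫ x : H3, f x * Ψ (Hdil ((2 : ℝ) ^ j) (Hmul (Hinv (xjk j k)) x))| ≤
          H * (∫ y : H3, Hnorm y ^ s * |Ψ y|) * (2 : ℝ) ^ (-(j : ℝ) * s)) := by
  have hmoment := fun a l (hl : 0 < l) =>
    integrable_and_abs_integral_holder_comp_mul_le hs0 hf hΨint hΨ0 hI a hl
  refine ⟨hmoment, fun j k => ?_⟩
  rw [wavelet_coeff_eq_integral, Real.rpow_mul zero_le_two, Real.rpow_neg zero_le_two,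
    Real.rpow_intCast, ← zpow_neg]
  exact (hmoment _ _ (zpow_pos two_pos _)).2

/-- If `f` is globally `s`-Hölder (`0 < s < 1`) and `Ψ ∈ L¹` has a vanishing
integral with `I = ∫ ‖y‖^s |Ψ(y)| dy < ∞`, then for every `a` and `λ > 0` the integral
`∫ f(a∗(λ∘y)) Ψ(y) dy` is well defined and bounded by `H·I·λ^s`; in particular the wavelet-type
coefficients `d_{j,k} = 2^{4j} ∫ f(x) Ψ(2^j∘(x_{j,k}⁻¹∗x)) dx` satisfy `|d_{j,k}| ≤ H·I·2^{−js}`. -/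
theorem heisenberg_holder_wavelet_bound
    (s H : ℝ) (hs0 : 0 < s) (hs1 : s < 1) (hH : 0 < H)
    (f Ψ : H3 → ℝ)
    (hf : ∀ x y : H3, |f x - f y| ≤ H * Hdist x y ^ s)
    (hΨint : Integrable Ψ (volume : Measure H3))
    (hΨ0 : ∫ y : H3, Ψ y = 0)
    (hI : Integrable (fun y : H3 => Hnorm y ^ s * |Ψ y|) (volume : Measure H3)) :
    (∀ a : H3, ∀ l : ℝ, 0 < l →
        Integrable (fun y : H3 => f (Hmul a (Hdil l y)) * Ψ y) (volume : Measure H3) ∧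
        |∫ y : H3, f (Hmul a (Hdil l y)) * Ψ y| ≤
          H * (∫ y : H3, Hnorm y ^ s * |Ψ y|) * l ^ s) ∧
    (∀ j : ℤ, ∀ k : ℤ × ℤ × ℤ,
        |(2 : ℝ) ^ (4 * j) *
            ∫ x : H3, f x * Ψ (Hdil ((2 : ℝ) ^ j) (Hmul (Hinv (xjk j k)) x))| ≤
          H * (∫ y : H3, Hnorm y ^ s * |Ψ y|) * (2 : ℝ) ^ (-(j : ℝ) * s)) :=
  heisenberg_holder_wavelet_bound_general s H hs0 f Ψ hf hΨint hΨ0 hI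
end
end

section
/- For every γ > 0 there exists a constant C > 0, independent of j and x, such that for all j ∈ ℤ and all x ∈ ℝ³, Σ_{k∈ℤ³} ‖x_{j,k}⁻¹∗x‖^γ / (1 + ‖2^j∘(x_{j,k}⁻¹∗x)‖)^{5+γ} ≤ C·2^{−jγ}. -/
noncomputable section

open MeasureTheory

/-! Dilating by `2^j` moves `x_{j,k}` to the lattice point `k`, so each term is `2^{-jγ}` times at
most `(1 + ‖k⁻¹∗X‖)^{-5}` with `X = 2^j∘x`, and it remains to bound `Σ_k (1 + ‖k⁻¹∗X‖)^{-a}`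
uniformly in `X` for `a > 4`. The coordinates of `y = k⁻¹∗X` are `X₁ - k₁`, `X₂ - k₂` and
`θ(k₁,k₂) - k₃`, and since `|y₁|, |y₂| ≤ ‖y‖`, `|y₃| ≤ ‖y‖²`, the weight is dominated by the product
`∏ (1 + |yᵢ|)^{-a/4}`. Summing `k₃`, then `k₂`, then `k₁`, each factor is a shifted one-dimensional
sum `Σ_n (1 + |θ - n|)^{-a/4}`, bounded independently of the shift `θ`. -/

open scoped ENNReal

lemma summable_and_tsum_le_of_tsum_ofReal_le {ι : Type*} {f : ι → ℝ} {C : ℝ}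
    (hf : ∀ i, 0 ≤ f i) (hC : 0 ≤ C) (h : ∑' i, ENNReal.ofReal (f i) ≤ ENNReal.ofReal C) :
    Summable f ∧ ∑' i, f i ≤ C := by
  have hs : Summable f := by
    simpa only [ENNReal.toReal_ofReal (hf _)] using
      ENNReal.summable_toReal (h.trans_lt ENNReal.ofReal_lt_top).ne
  refine ⟨hs, (ENNReal.ofReal_le_ofReal_iff hC).1 ?_⟩
  rwa [ENNReal.ofReal_tsum_of_nonneg hf hs]

lemma ENNReal.tsum_prod_mul_mul_le {α β γ : Type*} {a : α → ℝ≥0∞} {b : β → ℝ≥0∞}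
    {c : α → β → γ → ℝ≥0∞} {A B C : ℝ≥0∞} (ha : ∑' i, a i ≤ A) (hb : ∑' j, b j ≤ B)
    (hc : ∀ i j, ∑' k, c i j k ≤ C) :
    ∑' p : α × β × γ, a p.1 * b p.2.1 * c p.1 p.2.1 p.2.2 ≤ A * (B * C) :=
  calc ∑' p : α × β × γ, a p.1 * b p.2.1 * c p.1 p.2.1 p.2.2
      = ∑' i, a i * ∑' j, b j * ∑' k, c i j k := by
        simp only [ENNReal.tsum_prod', ENNReal.tsum_mul_left, mul_assoc]
    _ ≤ ∑' i, a i * (B * C) := by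
        gcongr with i
        calc ∑' j, b j * ∑' k, c i j k ≤ ∑' j, b j * C := by gcongr with j; exact hc i j
          _ ≤ B * C := by rw [ENNReal.tsum_mul_right]; gcongr
    _ ≤ A * (B * C) := by rw [ENNReal.tsum_mul_right]; gcongr

def decay (s w : ℝ) : ℝ := (1 + |w|) ^ (-s)

lemma decay_nonneg (s w : ℝ) : 0 ≤ decay s w := by unfold decay; positivity

lemma summable_decay_int {s : ℝ} (hs : 1 < s) : Summable fun i : ℤ => decay s i := by
  refine ((Real.summable_one_div_int_add_rpow (1 / 2) s).2 hs).of_nonneg_of_le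
    (fun i => decay_nonneg s i) fun i => ?_
  have hpos : 0 < |(i : ℝ) + 1 / 2| := by
    rw [abs_pos]
    rcases le_or_gt 0 i with hi | hi
    · have : (0 : ℝ) ≤ i := by exact_mod_cast hi
      linarith
    · have : (i : ℝ) ≤ -1 := by exact_mod_cast Int.le_sub_one_of_lt hi
      linarith
  have hle : |(i : ℝ) + 1 / 2| ≤ 1 + |(i : ℝ)| := by
    linarith [abs_add_le (i : ℝ) (1 / 2), abs_of_pos (one_half_pos : (0 : ℝ) < 1 / 2)]
  rw [decay, Real.rpow_neg (by positivity), ← one_div]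
  gcongr

lemma tsum_decay_int_pos {s : ℝ} (hs : 1 < s) : 0 < ∑' i : ℤ, decay s i :=
  (summable_decay_int hs).tsum_pos (fun i => decay_nonneg s i) 0 (by simp [decay])

lemma decay_sub_int_le {s : ℝ} (hs : 0 ≤ s) (θ : ℝ) (n : ℤ) :
    decay s (θ - n) ≤ 2 ^ s * decay s ((n - round θ : ℤ) : ℝ) := by
  have hround : 1 + |((n - round θ : ℤ) : ℝ)| ≤ 2 * (1 + |θ - n|) := by
    push_cast
    have := abs_sub_round θ
    have := abs_sub_le (n : ℝ) θ (round θ)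
    rw [abs_sub_comm (n : ℝ) θ] at this
    linarith [abs_nonneg (θ - n)]
  calc decay s (θ - n) = 2 ^ s * (2 * (1 + |θ - n|)) ^ (-s) := by
        rw [decay, Real.mul_rpow (by norm_num) (by positivity), ← mul_assoc,
          Real.rpow_neg zero_le_two, mul_inv_cancel₀ (by positivity), one_mul]
    _ ≤ 2 ^ s * decay s ((n - round θ : ℤ) : ℝ) := by
        unfold decay
        gcongr 2 ^ s * ?_
        exact Real.rpow_le_rpow_of_nonpos (by positivity) hround (neg_nonpos.2 hs)

lemma tsum_decay_sub_int_le {s : ℝ} (hs : 1 < s) (θ : ℝ) :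
    ∑' n : ℤ, ENNReal.ofReal (decay s (θ - n)) ≤
      ENNReal.ofReal (2 ^ s * ∑' i : ℤ, decay s i) :=
  calc ∑' n : ℤ, ENNReal.ofReal (decay s (θ - n))
      ≤ ∑' n : ℤ, ENNReal.ofReal (2 ^ s * decay s ((n - round θ : ℤ) : ℝ)) :=
        ENNReal.tsum_le_tsum fun n =>
          ENNReal.ofReal_le_ofReal (decay_sub_int_le (zero_lt_one.trans hs).le θ n)
    _ = ∑' i : ℤ, ENNReal.ofReal (2 ^ s * decay s i) :=
        (Equiv.subRight (round θ)).tsum_eq fun i : ℤ => ENNReal.ofReal (2 ^ s * decay s i)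
    _ = ENNReal.ofReal (2 ^ s * ∑' i : ℤ, decay s i) := by
        rw [← tsum_mul_left, ENNReal.ofReal_tsum_of_nonneg (f := fun i : ℤ => 2 ^ s * decay s i)
          (fun i => mul_nonneg (by positivity) (decay_nonneg s i))
          ((summable_decay_int hs).mul_left _)]

lemma hnorm_nonneg (x : H3) : 0 ≤ Hnorm x := by unfold Hnorm; positivity

lemma one_add_hnorm_pos (x : H3) : 0 < 1 + Hnorm x := by linarith [hnorm_nonneg x]

lemma hnorm_pow_four (x : H3) : Hnorm x ^ 4 = (x.1 ^ 2 + x.2.1 ^ 2) ^ 2 + x.2.2 ^ 2 := by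
  rw [Hnorm, ← Real.rpow_natCast, ← Real.rpow_mul (by positivity)]
  norm_num

lemma abs_fst_le_hnorm (x : H3) : |x.1| ≤ Hnorm x := by
  refine le_of_pow_le_pow_left₀ four_ne_zero (hnorm_nonneg x) ?_
  rw [hnorm_pow_four, show |x.1| ^ 4 = (x.1 ^ 2) ^ 2 by rw [← sq_abs x.1]; ring]
  nlinarith [sq_nonneg x.1, sq_nonneg x.2.1, sq_nonneg x.2.2]

lemma abs_snd_fst_le_hnorm (x : H3) : |x.2.1| ≤ Hnorm x := by
  refine le_of_pow_le_pow_left₀ four_ne_zero (hnorm_nonneg x) ?_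
  rw [hnorm_pow_four, show |x.2.1| ^ 4 = (x.2.1 ^ 2) ^ 2 by rw [← sq_abs x.2.1]; ring]
  nlinarith [sq_nonneg x.1, sq_nonneg x.2.1, sq_nonneg x.2.2]

lemma abs_snd_snd_le_hnorm_sq (x : H3) : |x.2.2| ≤ Hnorm x ^ 2 := by
  refine abs_le_of_sq_le_sq ?_ (by positivity)
  rw [← pow_mul, hnorm_pow_four]
  nlinarith [sq_nonneg (x.1 ^ 2 + x.2.1 ^ 2)]

lemma one_add_abs_mul_le (x : H3) :
    (1 + |x.1|) * (1 + |x.2.1|) * (1 + |x.2.2|) ≤ (1 + Hnorm x) ^ 4 := by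
  have hN := hnorm_nonneg x
  calc (1 + |x.1|) * (1 + |x.2.1|) * (1 + |x.2.2|)
      ≤ (1 + Hnorm x) * (1 + Hnorm x) * (1 + Hnorm x ^ 2) := by
        gcongr
        exacts [abs_fst_le_hnorm x, abs_snd_fst_le_hnorm x, abs_snd_snd_le_hnorm_sq x]
    _ ≤ (1 + Hnorm x) ^ 4 := by nlinarith [mul_nonneg hN (sq_nonneg (1 + Hnorm x))]

lemma one_add_hnorm_rpow_le_decay {s : ℝ} (hs : 0 ≤ s) (x : H3) :
    (1 + Hnorm x) ^ (-(4 * s)) ≤ decay s x.1 * decay s x.2.1 * decay s x.2.2 := by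
  have hN := hnorm_nonneg x
  rw [decay, decay, decay, ← Real.mul_rpow (by positivity) (by positivity),
    ← Real.mul_rpow (by positivity) (by positivity), neg_mul_eq_mul_neg,
    Real.rpow_mul (by positivity), show ((1 + Hnorm x) ^ (4 : ℝ)) = (1 + Hnorm x) ^ 4 by
      exact_mod_cast Real.rpow_natCast (1 + Hnorm x) 4]
  exact Real.rpow_le_rpow_of_nonpos (by positivity) (one_add_abs_mul_le x) (neg_nonpos.2 hs)

lemma hnorm_hdil {l : ℝ} (hl : 0 ≤ l) (x : H3) : Hnorm (Hdil l x) = l * Hnorm x := by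
  rw [Hnorm, Hnorm, Hdil,
    show ((l * x.1) ^ 2 + (l * x.2.1) ^ 2) ^ 2 + (l ^ 2 * x.2.2) ^ 2
      = l ^ 4 * ((x.1 ^ 2 + x.2.1 ^ 2) ^ 2 + x.2.2 ^ 2) by ring,
    Real.mul_rpow (by positivity) (by positivity), ← Real.rpow_natCast, ← Real.rpow_mul hl]
  norm_num

lemma hdil_hmul (l : ℝ) (x y : H3) : Hdil l (Hmul x y) = Hmul (Hdil l x) (Hdil l y) := by
  simp only [Hdil, Hmul, Prod.mk.injEq]
  refine ⟨by ring, by ring, by ring⟩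

lemma hdil_hinv (l : ℝ) (x : H3) : Hdil l (Hinv x) = Hinv (Hdil l x) := by
  simp only [Hdil, Hinv, Prod.mk.injEq]
  refine ⟨by ring, by ring, by ring⟩

lemma hdil_hdil (l m : ℝ) (x : H3) : Hdil l (Hdil m x) = Hdil (l * m) x := by
  simp only [Hdil, Prod.mk.injEq]
  refine ⟨by ring, by ring, by ring⟩

lemma hdil_one (x : H3) : Hdil 1 x = x := by simp [Hdil]

lemma hdil_hmul_hinv_xjk (j : ℤ) (k : ℤ × ℤ × ℤ) (x : H3) :
    Hdil ((2 : ℝ) ^ j) (Hmul (Hinv (xjk j k)) x) =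
      Hmul (Hinv (latticePt k)) (Hdil ((2 : ℝ) ^ j) x) := by
  rw [hdil_hmul, hdil_hinv, xjk, hdil_hdil, ← zpow_add₀ two_ne_zero, add_neg_cancel, zpow_zero,
    hdil_one]

lemma hmul_hinv_latticePt (k : ℤ × ℤ × ℤ) (x : H3) :
    Hmul (Hinv (latticePt k)) x =
      (x.1 - k.1, x.2.1 - k.2.1, x.2.2 + 2 * (k.1 * x.2.1 - k.2.1 * x.1) - k.2.2) := by
  simp only [Hmul, Hinv, latticePt, Prod.mk.injEq]
  refine ⟨by ring, by ring, by ring⟩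

theorem exists_tsum_one_add_hnorm_lattice_le {a : ℝ} (ha : 4 < a) :
    ∃ K > 0, ∀ x : H3,
      Summable (fun k : ℤ × ℤ × ℤ => (1 + Hnorm (Hmul (Hinv (latticePt k)) x)) ^ (-a)) ∧
      ∑' k : ℤ × ℤ × ℤ, (1 + Hnorm (Hmul (Hinv (latticePt k)) x)) ^ (-a) ≤ K := by
  set s := a / 4
  have hs : 1 < s := by simp only [s]; linarith
  set c := 2 ^ s * ∑' i : ℤ, decay s i
  have hc : 0 < c := mul_pos (by positivity) (tsum_decay_int_pos hs)
  refine ⟨c ^ 3, by positivity, fun x => summable_and_tsum_le_of_tsum_ofReal_le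
    (fun k => (Real.rpow_pos_of_pos (one_add_hnorm_pos _) _).le) (by positivity) ?_⟩
  have hterm (k : ℤ × ℤ × ℤ) : ENNReal.ofReal ((1 + Hnorm (Hmul (Hinv (latticePt k)) x)) ^ (-a))
      ≤ ENNReal.ofReal (decay s (x.1 - k.1)) * ENNReal.ofReal (decay s (x.2.1 - k.2.1)) *
        ENNReal.ofReal (decay s (x.2.2 + 2 * (k.1 * x.2.1 - k.2.1 * x.1) - k.2.2)) := by
    rw [← ENNReal.ofReal_mul (decay_nonneg _ _),
      ← ENNReal.ofReal_mul (mul_nonneg (decay_nonneg _ _) (decay_nonneg _ _))]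
    refine ENNReal.ofReal_le_ofReal ?_
    simpa only [show 4 * s = a by simp only [s]; ring, hmul_hinv_latticePt] using
      one_add_hnorm_rpow_le_decay (by positivity : 0 ≤ s) (Hmul (Hinv (latticePt k)) x)
  calc ∑' k : ℤ × ℤ × ℤ, ENNReal.ofReal ((1 + Hnorm (Hmul (Hinv (latticePt k)) x)) ^ (-a))
      ≤ ENNReal.ofReal c * (ENNReal.ofReal c * ENNReal.ofReal c) :=
        (ENNReal.tsum_le_tsum hterm).trans <| ENNReal.tsum_prod_mul_mul_le
          (a := fun k₁ : ℤ => ENNReal.ofReal (decay s (x.1 - k₁)))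
          (b := fun k₂ : ℤ => ENNReal.ofReal (decay s (x.2.1 - k₂)))
          (c := fun k₁ k₂ k₃ : ℤ =>
            ENNReal.ofReal (decay s (x.2.2 + 2 * (k₁ * x.2.1 - k₂ * x.1) - k₃)))
          (tsum_decay_sub_int_le hs _) (tsum_decay_sub_int_le hs _)
          fun _ _ => tsum_decay_sub_int_le hs _
    _ = ENNReal.ofReal (c ^ 3) := by
        rw [ENNReal.ofReal_pow hc.le]; ring

lemma hnorm_rpow_div_le {l γ : ℝ} (hl : 0 < l) (hγ : 0 ≤ γ) (a : ℝ) (y : H3) :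
    Hnorm y ^ γ / (1 + Hnorm (Hdil l y)) ^ (a + γ) ≤
      l ^ (-γ) * (1 + Hnorm (Hdil l y)) ^ (-a) := by
  have hy : Hnorm y = l⁻¹ * Hnorm (Hdil l y) := by
    rw [hnorm_hdil hl.le, inv_mul_cancel_left₀ hl.ne']
  set u := Hnorm (Hdil l y)
  have hu : 0 ≤ u := hnorm_nonneg _
  rw [hy, Real.mul_rpow (by positivity) hu, Real.inv_rpow hl.le, ← Real.rpow_neg hl.le,
    mul_div_assoc]
  gcongr
  calc u ^ γ / (1 + u) ^ (a + γ) ≤ (1 + u) ^ γ / (1 + u) ^ (a + γ) := by gcongr; linarith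
    _ = (1 + u) ^ (-a) := by rw [← Real.rpow_sub (by positivity)]; ring_nf

/-- For every `γ > 0` there is a constant `C > 0`, independent of `j` and `x`,
such that `Σ_{k∈ℤ³} ‖x_{j,k}⁻¹∗x‖^γ / (1 + ‖2^j∘(x_{j,k}⁻¹∗x)‖)^{5+γ} ≤ C·2^{−jγ}`. -/
theorem heisenberg_lattice_weighted_sum (γ : ℝ) (hγ : 0 < γ) :
    ∃ C : ℝ, 0 < C ∧ ∀ j : ℤ, ∀ x : H3,
      Summable (fun k : ℤ × ℤ × ℤ =>
        Hnorm (Hmul (Hinv (xjk j k)) x) ^ γ /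
          (1 + Hnorm (Hdil ((2 : ℝ) ^ j) (Hmul (Hinv (xjk j k)) x))) ^ (5 + γ)) ∧
      ∑' k : ℤ × ℤ × ℤ,
          Hnorm (Hmul (Hinv (xjk j k)) x) ^ γ /
            (1 + Hnorm (Hdil ((2 : ℝ) ^ j) (Hmul (Hinv (xjk j k)) x))) ^ (5 + γ) ≤
        C * (2 : ℝ) ^ (-(j : ℝ) * γ) := by
  obtain ⟨K, hK, hlattice⟩ := exists_tsum_one_add_hnorm_lattice_le (a := 5) (by norm_num)
  refine ⟨K, hK, fun j x => ?_⟩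
  obtain ⟨hsum, hle⟩ := hlattice (Hdil ((2 : ℝ) ^ j) x)
  have hscale : ((2 : ℝ) ^ j) ^ (-γ) = (2 : ℝ) ^ (-(j : ℝ) * γ) := by
    rw [← Real.rpow_intCast, ← Real.rpow_mul zero_le_two]; ring_nf
  have hterm (k : ℤ × ℤ × ℤ) :
      Hnorm (Hmul (Hinv (xjk j k)) x) ^ γ /
          (1 + Hnorm (Hdil ((2 : ℝ) ^ j) (Hmul (Hinv (xjk j k)) x))) ^ (5 + γ) ≤
        (2 : ℝ) ^ (-(j : ℝ) * γ) *
          (1 + Hnorm (Hmul (Hinv (latticePt k)) (Hdil ((2 : ℝ) ^ j) x))) ^ (-(5 : ℝ)) :=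
    (hnorm_rpow_div_le (zpow_pos two_pos j) hγ.le 5 _).trans_eq
      (by rw [hdil_hmul_hinv_xjk, hscale])
  have hnonneg (k : ℤ × ℤ × ℤ) :
      0 ≤ Hnorm (Hmul (Hinv (xjk j k)) x) ^ γ /
        (1 + Hnorm (Hdil ((2 : ℝ) ^ j) (Hmul (Hinv (xjk j k)) x))) ^ (5 + γ) :=
    div_nonneg (Real.rpow_nonneg (hnorm_nonneg _) _)
      (Real.rpow_pos_of_pos (one_add_hnorm_pos _) _).le
  have hsum' := hsum.mul_left ((2 : ℝ) ^ (-(j : ℝ) * γ))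
  have hsummable := hsum'.of_nonneg_of_le hnonneg hterm
  refine ⟨hsummable, ?_⟩
  calc _ ≤ _ := hsummable.tsum_le_tsum hterm hsum'
    _ = (2 : ℝ) ^ (-(j : ℝ) * γ) * ∑' k : ℤ × ℤ × ℤ,
          (1 + Hnorm (Hmul (Hinv (latticePt k)) (Hdil ((2 : ℝ) ^ j) x))) ^ (-(5 : ℝ)) :=
        tsum_mul_left
    _ ≤ K * (2 : ℝ) ^ (-(j : ℝ) * γ) := by rw [mul_comm]; gcongr
end
end
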